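/- Let n ≥ 3. Then (1/4)·Σ_{E₁,E₂,E₃,E₄ ∈ B} σ([E₁,[E₂,η]], E₃, E₄)·H(E₁,E₃)·H(E₂,E₄) = −(1/2)·(n−2)²(n−1)n(n+2). -/

import Mathlib

open Matrix

/-- The square complex matrices of size `n`. -/
abbrev Mat (n : ℕ) := Matrix (Fin n) (Fin n) ℂ

/-- `T_k = (i/√(k(k+1)))·diag(1,…,1,−k,0,…,0)`, with `k` ones (positions `0,…,k−1` in
0-based indexing, i.e. positions `1,…,k` in the 1-based indexing of the paper) followed by
`−k`. -/
noncomputable def Tmat (n k : ℕ) : Mat n :=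
  (Complex.I / (Real.sqrt (k * (k + 1)) : ℂ)) •
    Matrix.diagonal (fun j : Fin n => if (j : ℕ) < k then 1 else if (j : ℕ) = k then -(k : ℂ) else 0)

/-- `E^r(k,l)`: the matrix with `(p,q)` entry `(1/√2)(δ_{kp}δ_{lq} − δ_{kq}δ_{lp})`. -/
noncomputable def Ermat (n : ℕ) (k l : Fin n) : Mat n :=
  ((Real.sqrt 2 : ℂ))⁻¹ • (Matrix.single k l 1 - Matrix.single l k 1)

/-- `E^c(k,l)`: the matrix with `(p,q)` entry `(i/√2)(δ_{kp}δ_{lq} + δ_{kq}δ_{lp})`. -/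
noncomputable def Ecmat (n : ℕ) (k l : Fin n) : Mat n :=
  (Complex.I / (Real.sqrt 2 : ℂ)) • (Matrix.single k l 1 + Matrix.single l k 1)

/-- The index set for the basis `B` of `su(n)`: `n−1` indices for the `T_k` and two copies
of the set of pairs `k < l` for the `E^r(k,l)` and `E^c(k,l)`. -/
abbrev BIdx (n : ℕ) :=
  Fin (n - 1) ⊕ ({p : Fin n × Fin n // p.1 < p.2} ⊕ {p : Fin n × Fin n // p.1 < p.2})

/-- The family `B = {T_1,…,T_{n−1}} ∪ {E^r(k,l)} ∪ {E^c(k,l)}`. -/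
noncomputable def bmat (n : ℕ) : BIdx n → Mat n
  | Sum.inl k => Tmat n (k + 1)
  | Sum.inr (Sum.inl p) => Ermat n p.1.1 p.1.2
  | Sum.inr (Sum.inr p) => Ecmat n p.1.1 p.1.2

/-- `η = i·diag(1,…,1,−(n−1))`. -/
noncomputable def eta (n : ℕ) : Mat n :=
  Complex.I • Matrix.diagonal (fun j : Fin n => if (j : ℕ) < n - 1 then 1 else -((n : ℂ) - 1))

/-- `H(X,Y) = i·tr(η(XY + YX))`, real-valued on `su(n)`. -/
noncomputable def Hform (n : ℕ) (X Y : Mat n) : ℂ :=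
  Complex.I * (eta n * (X * Y + Y * X)).trace

/-- `σ(X,Y,Z) = i(tr(XYZ) + tr(XZY))`, real-valued on `su(n)`. -/
noncomputable def sigmaC (n : ℕ) (X Y Z : Mat n) : ℂ :=
  Complex.I * ((X * Y * Z).trace + (X * Z * Y).trace)

/-- The matrix commutator `[A,B] = AB − BA`. -/
noncomputable def brkt {n : ℕ} (A B : Mat n) : Mat n := A * B - B * A

noncomputable def eC (K p : ℕ) : ℂ := if p < K then 1 else if p = K then -(K:ℂ) else 0

lemma cartan_sum (M : ℕ) : ∀ p r : ℕ, p < M + 1 → r < M + 1 →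
    ∑ k ∈ Finset.range M, eC (k+1) p * eC (k+1) r / (((k:ℂ)+1)*((k:ℂ)+2))
      = (if p = r then 1 else 0) - ((M:ℂ)+1)⁻¹ := by
  induction M with
  | zero =>
    intro p r hp hr
    interval_cases p; interval_cases r
    simp
  | succ M ih =>
    intro p r hp hr
    have h1 : ((M:ℂ)+1) ≠ 0 := by
      have := Nat.cast_add_one_ne_zero (R := ℂ) M; simpa using this
    have h2 : ((M:ℂ)+2) ≠ 0 := by
      have h : ((M+2 : ℕ):ℂ) ≠ 0 := Nat.cast_ne_zero.mpr (by omega)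
      push_cast at h; exact h
    rw [Finset.sum_range_succ]
    have eMM : eC (M+1) (M+1) = -((M:ℂ)+1) := by simp [eC]
    push_cast
    by_cases hpM : p = M + 1
    · have hz : ∑ k ∈ Finset.range M, eC (k+1) p * eC (k+1) r / (((k:ℂ)+1)*((k:ℂ)+2)) = 0 := by
        apply Finset.sum_eq_zero
        intro k hk
        have hk' := Finset.mem_range.mp hk
        have : eC (k+1) p = 0 := by
          simp only [eC, hpM]; rw [if_neg (by omega), if_neg (by omega)]
        simp [this]
      rw [hz, hpM, eMM]
      by_cases hrM : r = M + 1
      · rw [hrM, eMM, if_pos rfl]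
        have h3 : ((M:ℂ)+1+1) ≠ 0 := by rw [show (M:ℂ)+1+1 = (M:ℂ)+2 by ring]; exact h2
        field_simp
        ring
      · have her : eC (M+1) r = 1 := by
          simp only [eC]; rw [if_pos (by omega)]
        rw [her, if_neg (by omega)]
        have h3 : ((M:ℂ)+1+1) ≠ 0 := by rw [show (M:ℂ)+1+1 = (M:ℂ)+2 by ring]; exact h2
        field_simp
        ring
    · by_cases hrM : r = M + 1
      · have hz : ∑ k ∈ Finset.range M, eC (k+1) p * eC (k+1) r / (((k:ℂ)+1)*((k:ℂ)+2)) = 0 := by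
          apply Finset.sum_eq_zero
          intro k hk
          have hk' := Finset.mem_range.mp hk
          have : eC (k+1) r = 0 := by
            simp only [eC, hrM]; rw [if_neg (by omega), if_neg (by omega)]
          simp [this]
        rw [hz, hrM, eMM]
        have hep : eC (M+1) p = 1 := by
          simp only [eC]; rw [if_pos (by omega)]
        rw [hep, if_neg (by omega)]
        have h3 : ((M:ℂ)+1+1) ≠ 0 := by rw [show (M:ℂ)+1+1 = (M:ℂ)+2 by ring]; exact h2
        field_simp
        ring
      · rw [ih p r (by omega) (by omega)]
        have hep : eC (M+1) p = 1 := by simp only [eC]; rw [if_pos (by omega)]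
        have her : eC (M+1) r = 1 := by simp only [eC]; rw [if_pos (by omega)]
        rw [hep, her]
        have h3 : ((M:ℂ)+1+1) ≠ 0 := by rw [show (M:ℂ)+1+1 = (M:ℂ)+2 by ring]; exact h2
        by_cases hpr : p = r <;> simp only [if_pos, if_neg, hpr, if_true, if_false] <;>
          · field_simp
            ring

lemma Tmat_apply (n K : ℕ) (i j : Fin n) :
    Tmat n K i j = if i = j then (Complex.I / (Real.sqrt (K * (K + 1)) : ℂ)) * eC K (i:ℕ) else 0 := by
  simp only [Tmat, Matrix.smul_apply, Matrix.diagonal_apply, eC, smul_eq_mul]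
  split_ifs <;> simp_all

lemma csq (K : ℕ) (hK : 1 ≤ K) :
    (Complex.I / (Real.sqrt (K * (K + 1)) : ℂ)) * (Complex.I / (Real.sqrt (K * (K + 1)) : ℂ))
      = -(((K:ℂ) * ((K:ℂ) + 1))⁻¹) := by
  have h0 : (0:ℝ) ≤ (K:ℝ) * ((K:ℝ) + 1) := by positivity
  have hs : (Real.sqrt (K * (K + 1)) : ℝ) * (Real.sqrt (K * (K + 1)) : ℝ) = (K:ℝ) * ((K:ℝ)+1) :=
    Real.mul_self_sqrt h0
  have hcast : ((Real.sqrt (K * (K + 1)) : ℝ) : ℂ) * ((Real.sqrt (K * (K + 1)) : ℝ) : ℂ)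
      = (K:ℂ) * ((K:ℂ)+1) := by
    rw [← Complex.ofReal_mul, hs]; push_cast; ring
  rw [div_mul_div_comm, Complex.I_mul_I, hcast, neg_div, one_div]

lemma Tpart (n : ℕ) (hn : 1 ≤ n) (p q r s : Fin n) :
    ∑ k : Fin (n-1), Tmat n (k+1) p q * Tmat n (k+1) r s
      = -((if p = q then (1:ℂ) else 0) * (if r = s then 1 else 0) *
          ((if p = r then (1:ℂ) else 0) - (n:ℂ)⁻¹)) := by
  by_cases hpq : p = q
  case neg =>
    refine (Finset.sum_eq_zero ?_).trans (by rw [if_neg hpq]; ring)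
    intro k _
    rw [Tmat_apply, if_neg hpq]; ring
  case pos =>
  by_cases hrs : r = s
  case neg =>
    refine (Finset.sum_eq_zero ?_).trans (by rw [if_neg hrs]; ring)
    intro k _
    rw [Tmat_apply n _ r s, if_neg hrs]; ring
  case pos =>
  have key : ∑ k : Fin (n-1), Tmat n (k+1) p q * Tmat n (k+1) r s
      = -∑ k : Fin (n-1), eC ((k:ℕ)+1) (p:ℕ) * eC ((k:ℕ)+1) (r:ℕ) /
          ((((k:ℕ):ℂ)+1) * (((k:ℕ):ℂ)+2)) := by
    rw [← Finset.sum_neg_distrib]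
    apply Finset.sum_congr rfl
    intro k _
    rw [Tmat_apply, Tmat_apply, if_pos hpq, if_pos hrs, mul_mul_mul_comm,
      csq ((k:ℕ)+1) (by omega)]
    push_cast
    ring
  rw [key, Fin.sum_univ_eq_sum_range (fun k => eC (k+1) (p:ℕ) * eC (k+1) (r:ℕ) /
      (((k:ℂ)+1) * ((k:ℂ)+2)))]
  rw [cartan_sum (n-1) (p:ℕ) (r:ℕ) (by omega) (by omega)]
  have hcast : ((n-1 : ℕ):ℂ) + 1 = (n:ℂ) := by
    have : ((n-1:ℕ):ℂ) = (n:ℂ) - 1 := by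
      push_cast [Nat.cast_sub hn]; ring
    rw [this]; ring
  rw [hcast, if_pos hpq, if_pos hrs]
  have hiff : ((p:ℕ) = (r:ℕ)) ↔ p = r := by rw [Fin.ext_iff]
  by_cases hpr : p = r
  · rw [if_pos (hiff.mpr hpr), if_pos hpr]; ring
  · rw [if_neg (fun h => hpr (hiff.mp h)), if_neg hpr]; ring

lemma stdB_apply (n : ℕ) (k l i j : Fin n) :
    Matrix.single k l (1:ℂ) i j = if k = i ∧ l = j then 1 else 0 := rfl

lemma sqrt2_inv_sq : ((Real.sqrt 2 : ℂ))⁻¹ * ((Real.sqrt 2 : ℂ))⁻¹ = (2:ℂ)⁻¹ := by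
  rw [← mul_inv]
  congr 1
  rw [← Complex.ofReal_mul, Real.mul_self_sqrt (by norm_num)]
  norm_num

lemma isq2 : (Complex.I / (Real.sqrt 2 : ℂ)) * (Complex.I / (Real.sqrt 2 : ℂ)) = -(2:ℂ)⁻¹ := by
  rw [div_mul_div_comm, Complex.I_mul_I]
  rw [show ((Real.sqrt 2 : ℂ)) * ((Real.sqrt 2 : ℂ)) = (2:ℂ) from ?_]
  · rw [neg_div, one_div]
  · rw [← Complex.ofReal_mul, Real.mul_self_sqrt (by norm_num)]; norm_num

lemma pairpart (n : ℕ) (k l p q r s : Fin n) :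
    Ermat n k l p q * Ermat n k l r s + Ecmat n k l p q * Ecmat n k l r s
      = -((if k = p ∧ l = q then (1:ℂ) else 0) * (if l = r ∧ k = s then 1 else 0)
        + (if l = p ∧ k = q then (1:ℂ) else 0) * (if k = r ∧ l = s then 1 else 0)) := by
  simp only [Ermat, Ecmat, Matrix.smul_apply, Matrix.sub_apply, Matrix.add_apply, smul_eq_mul,
    stdB_apply]
  have e1 := sqrt2_inv_sq
  have e2 := isq2
  set a := (if k = p ∧ l = q then (1:ℂ) else 0)
  set b := (if l = p ∧ k = q then (1:ℂ) else 0)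
  set c := (if k = r ∧ l = s then (1:ℂ) else 0)
  set d := (if l = r ∧ k = s then (1:ℂ) else 0)
  calc ((Real.sqrt 2 : ℂ))⁻¹ * (a - b) * (((Real.sqrt 2 : ℂ))⁻¹ * (c - d))
        + Complex.I / (Real.sqrt 2 : ℂ) * (a + b) * (Complex.I / (Real.sqrt 2 : ℂ) * (c + d))
      = (((Real.sqrt 2 : ℂ))⁻¹ * ((Real.sqrt 2 : ℂ))⁻¹) * ((a-b)*(c-d))
        + ((Complex.I / (Real.sqrt 2 : ℂ)) * (Complex.I / (Real.sqrt 2 : ℂ))) * ((a+b)*(c+d)) := by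
        ring
    _ = -(a * d + b * c) := by rw [e1, e2]; ring

lemma Epart (n : ℕ) (p q r s : Fin n) :
    (∑ x : {z : Fin n × Fin n // z.1 < z.2},
        (Ermat n x.1.1 x.1.2 p q * Ermat n x.1.1 x.1.2 r s
          + Ecmat n x.1.1 x.1.2 p q * Ecmat n x.1.1 x.1.2 r s))
      = -((if p = s then (1:ℂ) else 0) * (if q = r then 1 else 0) *
          (if p = q then 0 else 1)) := by
  by_cases hps : p = s
  case neg =>
    refine (Finset.sum_eq_zero ?_).trans (by rw [if_neg hps]; ring)
    rintro ⟨⟨k,l⟩,hkl⟩ _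
    rw [pairpart]
    have hkl' : (k:ℕ) < (l:ℕ) := hkl
    simp only [Fin.ext_iff, Fin.lt_def] at *
    split_ifs <;> first | ring1 | (exfalso; omega) | (exfalso; simp_all) | simp_all | omega
  case pos =>
  by_cases hqr : q = r
  case neg =>
    refine (Finset.sum_eq_zero ?_).trans (by rw [if_neg hqr]; ring)
    rintro ⟨⟨k,l⟩,hkl⟩ _
    rw [pairpart]
    have hkl' : (k:ℕ) < (l:ℕ) := hkl
    simp only [Fin.ext_iff, Fin.lt_def] at *
    split_ifs <;> first | ring1 | (exfalso; omega) | (exfalso; simp_all) | simp_all | omega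
  case pos =>
  by_cases hpq : p = q
  case pos =>
    refine (Finset.sum_eq_zero ?_).trans (by rw [if_pos hpq]; ring)
    rintro ⟨⟨k,l⟩,hkl⟩ _
    rw [pairpart]
    have hkl' : (k:ℕ) < (l:ℕ) := hkl
    simp only [Fin.ext_iff, Fin.lt_def] at *
    split_ifs <;> first | ring1 | (exfalso; omega) | (exfalso; simp_all) | simp_all | omega
  case neg =>
    rw [if_pos hps, if_pos hqr, if_neg hpq]
    rcases lt_trichotomy p q with h | h | h
    · rw [Finset.sum_eq_single_of_mem (⟨(p,q), h⟩ : {z : Fin n × Fin n // z.1 < z.2})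
        (Finset.mem_univ _) ?_]
      · rw [pairpart]
        simp only [Fin.ext_iff, Fin.lt_def] at *
        split_ifs <;> first | ring1 | (exfalso; omega) | (exfalso; simp_all) | simp_all | omega
      · rintro ⟨⟨k,l⟩,hkl⟩ _ hx
        rw [pairpart]
        have hkl' : (k:ℕ) < (l:ℕ) := hkl
        simp only [ne_eq, Subtype.mk.injEq, Prod.mk.injEq, not_and] at hx
        simp only [Fin.ext_iff, Fin.lt_def] at *
        split_ifs <;> first | ring1 | (exfalso; omega) | (exfalso; simp_all) | simp_all | omega
    · exact absurd h hpq
    · rw [Finset.sum_eq_single_of_mem (⟨(q,p), h⟩ : {z : Fin n × Fin n // z.1 < z.2})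
        (Finset.mem_univ _) ?_]
      · rw [pairpart]
        simp only [Fin.ext_iff, Fin.lt_def] at *
        split_ifs <;> first | ring1 | (exfalso; omega) | (exfalso; simp_all) | simp_all | omega
      · rintro ⟨⟨k,l⟩,hkl⟩ _ hx
        rw [pairpart]
        have hkl' : (k:ℕ) < (l:ℕ) := hkl
        simp only [ne_eq, Subtype.mk.injEq, Prod.mk.injEq, not_and] at hx
        simp only [Fin.ext_iff, Fin.lt_def] at *
        split_ifs <;> first | ring1 | (exfalso; omega) | (exfalso; simp_all) | simp_all | omega

set_option linter.unreachableTactic false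
set_option linter.unusedTactic false

lemma fierz (n : ℕ) (hn : 3 ≤ n) (p q r s : Fin n) :
    ∑ a : BIdx n, bmat n a p q * bmat n a r s
      = -((if p = s then (1:ℂ) else 0) * (if q = r then 1 else 0))
        + (n:ℂ)⁻¹ * ((if p = q then 1 else 0) * (if r = s then 1 else 0)) := by
  have hn0 : ((n:ℂ)) ≠ 0 := Nat.cast_ne_zero.mpr (by omega)
  rw [Fintype.sum_sum_type, Fintype.sum_sum_type]
  simp only [bmat]
  rw [Tpart n (by omega) p q r s]
  rw [← Finset.sum_add_distrib, Epart n p q r s]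
  by_cases hpq : p = q <;> by_cases hrs : r = s <;> by_cases hps : p = s <;>
    by_cases hqr : q = r <;> by_cases hpr : p = r <;>
    simp only [hpq, hrs, hps, hqr, hpr, if_true, if_false, if_pos, if_neg] <;>
    first
      | ring1
      | (exfalso; simp only [Fin.ext_iff] at *; omega)
      | (simp only [Fin.ext_iff] at *; split_ifs <;> first | ring1 | (exfalso; omega))

lemma fierzM (n : ℕ) (hn : 3 ≤ n) (Q : Mat n) :
    ∑ a : BIdx n, bmat n a * Q * bmat n a
      = -Q.trace • (1 : Mat n) + (n:ℂ)⁻¹ • Q := by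
  ext j m
  have h1 : (∑ a : BIdx n, bmat n a * Q * bmat n a) j m
      = ∑ l, ∑ k, Q k l * ∑ a : BIdx n, bmat n a j k * bmat n a l m := by
    rw [Matrix.sum_apply]
    have e1 : ∀ a : BIdx n, (bmat n a * Q * bmat n a) j m
        = ∑ l, ∑ k, Q k l * (bmat n a j k * bmat n a l m) := by
      intro a
      rw [Matrix.mul_apply]
      refine Finset.sum_congr rfl fun l _ => ?_
      rw [Matrix.mul_apply, Finset.sum_mul]
      exact Finset.sum_congr rfl fun k _ => by ring
    simp only [e1]
    rw [Finset.sum_comm]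
    refine Finset.sum_congr rfl fun l _ => ?_
    rw [Finset.sum_comm]
    exact Finset.sum_congr rfl fun k _ => (Finset.mul_sum _ _ _).symm
  rw [h1]
  simp only [fierz n hn]
  simp only [Matrix.add_apply, Matrix.smul_apply, Matrix.neg_apply, Matrix.one_apply,
    smul_eq_mul, Matrix.trace, Matrix.diag]
  simp only [mul_add, mul_neg, mul_ite, ite_mul, mul_zero, zero_mul, mul_one, one_mul,
    Finset.sum_add_distrib, Finset.sum_neg_distrib, Finset.sum_ite_eq, Finset.sum_ite_eq',
    Finset.mem_univ, if_true]
  by_cases hjm : j = m <;> simp [hjm, Finset.mul_sum] <;> ring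

lemma fierzTr (n : ℕ) (hn : 3 ≤ n) (Q : Mat n) :
    ∑ a : BIdx n, ((Q * bmat n a).trace) • bmat n a
      = -Q + ((n:ℂ)⁻¹ * Q.trace) • (1 : Mat n) := by
  ext p q
  have h1 : (∑ a : BIdx n, ((Q * bmat n a).trace) • bmat n a) p q
      = ∑ r, ∑ s, Q r s * ∑ a : BIdx n, bmat n a s r * bmat n a p q := by
    rw [Matrix.sum_apply]
    have e1 : ∀ a : BIdx n, (((Q * bmat n a).trace) • bmat n a) p q
        = ∑ r, ∑ s, Q r s * (bmat n a s r * bmat n a p q) := by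
      intro a
      rw [Matrix.smul_apply, smul_eq_mul, Matrix.trace]
      simp only [Matrix.diag, Matrix.mul_apply]
      rw [Finset.sum_mul]
      refine Finset.sum_congr rfl fun r _ => ?_
      rw [Finset.sum_mul]
      exact Finset.sum_congr rfl fun s _ => by ring
    simp only [e1]
    rw [Finset.sum_comm]
    refine Finset.sum_congr rfl fun r _ => ?_
    rw [Finset.sum_comm]
    exact Finset.sum_congr rfl fun s _ => (Finset.mul_sum _ _ _).symm
  rw [h1]
  simp only [fierz n hn]
  simp only [Matrix.add_apply, Matrix.smul_apply, Matrix.neg_apply, Matrix.one_apply,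
    smul_eq_mul, Matrix.trace, Matrix.diag]
  simp only [mul_add, mul_neg, mul_ite, ite_mul, mul_zero, zero_mul, mul_one, one_mul,
    Finset.sum_add_distrib, Finset.sum_neg_distrib, Finset.sum_ite_eq, Finset.sum_ite_eq',
    Finset.mem_univ, if_true]
  by_cases hpq : p = q <;> simp [hpq, Finset.mul_sum] <;>
    first
      | ring1
      | exact Finset.sum_congr rfl fun x _ => by ring

lemma L1g (n : ℕ) (hn : 3 ≤ n) (P Q R : Mat n) :
    ∑ a : BIdx n, (P * bmat n a * Q * bmat n a * R).trace
      = -(Q.trace * (P * R).trace) + (n:ℂ)⁻¹ * (P * Q * R).trace := by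
  have e1 : ∀ a : BIdx n, P * bmat n a * Q * bmat n a * R
      = P * (bmat n a * Q * bmat n a) * R := by
    intro a; noncomm_ring
  calc ∑ a : BIdx n, (P * bmat n a * Q * bmat n a * R).trace
      = ∑ a : BIdx n, (P * (bmat n a * Q * bmat n a) * R).trace :=
        Finset.sum_congr rfl fun a _ => by rw [e1]
    _ = (P * (∑ a : BIdx n, bmat n a * Q * bmat n a) * R).trace := by
        rw [Finset.mul_sum, Finset.sum_mul, Matrix.trace_sum]
    _ = -(Q.trace * (P * R).trace) + (n:ℂ)⁻¹ * (P * Q * R).trace := by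
        rw [fierzM n hn]
        simp only [Matrix.mul_add, Matrix.add_mul, Matrix.mul_smul, Matrix.smul_mul,
          Matrix.mul_one, Matrix.trace_add, Matrix.trace_smul, smul_eq_mul]
        rw [Matrix.mul_assoc P Q R]
        ring

lemma L2g (n : ℕ) (hn : 3 ≤ n) (P Q R S : Mat n) :
    ∑ a : BIdx n, (P * bmat n a * Q).trace * (R * bmat n a * S).trace
      = -((S * R * Q * P).trace) + (n:ℂ)⁻¹ * ((Q * P).trace * (S * R).trace) := by
  have e1 : ∀ a : BIdx n, (P * bmat n a * Q).trace * (R * bmat n a * S).trace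
      = ((S * R) * (((Q * P) * bmat n a).trace • bmat n a)).trace := by
    intro a
    rw [Matrix.mul_smul, Matrix.trace_smul, smul_eq_mul]
    rw [Matrix.trace_mul_cycle P (bmat n a) Q, Matrix.trace_mul_cycle R (bmat n a) S]
  calc ∑ a : BIdx n, (P * bmat n a * Q).trace * (R * bmat n a * S).trace
      = ∑ a : BIdx n, ((S * R) * (((Q * P) * bmat n a).trace • bmat n a)).trace :=
        Finset.sum_congr rfl fun a _ => e1 a
    _ = ((S * R) * (∑ a : BIdx n, ((Q * P) * bmat n a).trace • bmat n a)).trace := by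
        rw [Finset.mul_sum, Matrix.trace_sum]
    _ = -((S * R * Q * P).trace) + (n:ℂ)⁻¹ * ((Q * P).trace * (S * R).trace) := by
        rw [fierzTr n hn]
        simp only [Matrix.mul_add, Matrix.mul_neg, Matrix.mul_smul, Matrix.mul_one,
          Matrix.trace_add, Matrix.trace_neg, Matrix.trace_smul, smul_eq_mul]
        rw [Matrix.mul_assoc (S*R) Q P]
        ring

lemma dsum (n : ℕ) (hn : 1 ≤ n) (a b : ℂ) :
    ∑ j : Fin n, (if (j:ℕ) < n - 1 then a else b) = ((n-1 : ℕ):ℂ) * a + b := by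
  rw [Fin.sum_univ_eq_sum_range (fun j => if j < n - 1 then a else b)]
  rw [show n = (n-1)+1 from by omega, Finset.sum_range_succ]
  rw [show (n-1)+1-1 = n-1 from by omega]
  rw [if_neg (by omega)]
  congr 1
  rw [Finset.sum_congr rfl (fun j hj => if_pos (by
    have := Finset.mem_range.mp hj; omega)), Finset.sum_const, Finset.card_range]
  rw [nsmul_eq_mul]

lemma natsub_cast (n : ℕ) (hn : 1 ≤ n) : ((n-1 : ℕ):ℂ) = (n:ℂ) - 1 := by
  push_cast [Nat.cast_sub hn]; ring

lemma trh1 (n : ℕ) (hn : 1 ≤ n) : (eta n).trace = 0 := by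
  simp only [eta, Matrix.trace_smul, Matrix.trace_diagonal, smul_eq_mul]
  rw [dsum n hn, natsub_cast n hn]
  ring

lemma trh2 (n : ℕ) (hn : 1 ≤ n) : (eta n * eta n).trace = (n:ℂ) - (n:ℂ)^2 := by
  simp only [eta, Matrix.smul_mul, Matrix.mul_smul, Matrix.diagonal_mul_diagonal, smul_smul,
    Matrix.trace_smul, Matrix.trace_diagonal, smul_eq_mul, Pi.mul_apply]
  rw [Finset.sum_congr rfl (fun j _ => show _ = (if ((j : Fin n):ℕ) < n - 1 then (1:ℂ)
    else ((n:ℂ)-1)^2) from by split_ifs <;> ring)]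
  rw [dsum n hn, natsub_cast n hn]
  rw [Complex.I_mul_I]
  ring

lemma trh3 (n : ℕ) (hn : 1 ≤ n) :
    (eta n * (eta n * eta n)).trace = Complex.I * ((n:ℂ)^3 - 3*(n:ℂ)^2 + 2*(n:ℂ)) := by
  simp only [eta, Matrix.smul_mul, Matrix.mul_smul, Matrix.diagonal_mul_diagonal, smul_smul,
    Matrix.trace_smul, Matrix.trace_diagonal, smul_eq_mul, Pi.mul_apply]
  rw [Finset.sum_congr rfl (fun j _ => show _ = (if ((j : Fin n):ℕ) < n - 1 then (1:ℂ)
    else -((n:ℂ)-1)^3) from by split_ifs <;> ring)]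
  rw [dsum n hn, natsub_cast n hn]
  rw [Complex.I_mul_I]
  first
  | ring1
  | (ring_nf; rw [Complex.I_sq]; ring1)
  | (ring_nf; rw [Complex.I_sq]; ring_nf)

lemma trh4 (n : ℕ) (hn : 1 ≤ n) :
    (eta n * (eta n * (eta n * eta n))).trace = (n:ℂ)^4 - 4*(n:ℂ)^3 + 6*(n:ℂ)^2 - 3*(n:ℂ) := by
  simp only [eta, Matrix.smul_mul, Matrix.mul_smul, Matrix.diagonal_mul_diagonal, smul_smul,
    Matrix.trace_smul, Matrix.trace_diagonal, smul_eq_mul, Pi.mul_apply]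
  rw [Finset.sum_congr rfl (fun j _ => show _ = (if ((j : Fin n):ℕ) < n - 1 then (1:ℂ)
    else ((n:ℂ)-1)^4) from by split_ifs <;> ring)]
  rw [dsum n hn, natsub_cast n hn]
  rw [Complex.I_mul_I]
  first
  | ring1
  | (ring_nf; rw [Complex.I_sq]; ring1)
  | (ring_nf; rw [Complex.I_sq]; ring_nf)

lemma hform_eq (n : ℕ) (X Y : Mat n) :
    Hform n X Y = ((Complex.I • (eta n * X + X * eta n)) * Y).trace := by
  simp only [Hform, Matrix.mul_add, Matrix.add_mul, Matrix.smul_mul, Matrix.trace_add,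
    Matrix.trace_smul, smul_eq_mul, ← Matrix.mul_assoc]
  rw [Matrix.trace_mul_cycle (eta n) Y X]

lemma stage4 (n : ℕ) (hn : 3 ≤ n) (A M₁ M₂ C : Mat n) :
    ∑ a : BIdx n, sigmaC n A C (bmat n a) * (M₁ * C).trace * (M₂ * bmat n a).trace
      = Complex.I * (M₁ * C).trace *
          (-((M₂ * (A * C)).trace) - (M₂ * C * A).trace
            + (n:ℂ)⁻¹ * (M₂.trace * ((A * C).trace + (C * A).trace))) := by
  calc ∑ a : BIdx n, sigmaC n A C (bmat n a) * (M₁ * C).trace * (M₂ * bmat n a).trace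
      = ∑ a : BIdx n,
          ((Complex.I * (M₁ * C).trace) *
            ((A * C * bmat n a * (1:Mat n)).trace * (M₂ * bmat n a * (1:Mat n)).trace)
          + (Complex.I * (M₁ * C).trace) *
            ((A * bmat n a * C).trace * (M₂ * bmat n a * (1:Mat n)).trace)) :=
        Finset.sum_congr rfl fun a _ => by
          simp only [sigmaC, Matrix.mul_one]; ring
    _ = _ := by
        rw [Finset.sum_add_distrib, ← Finset.mul_sum, ← Finset.mul_sum, L2g n hn, L2g n hn]
        simp only [Matrix.one_mul, Matrix.mul_one]
        ring

lemma stage3 (n : ℕ) (hn : 3 ≤ n) (A M₁ M₂ : Mat n) :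
    ∑ a : BIdx n,
        (Complex.I * (M₁ * bmat n a).trace *
          (-((M₂ * (A * bmat n a)).trace) - (M₂ * bmat n a * A).trace
            + (n:ℂ)⁻¹ * (M₂.trace * ((A * bmat n a).trace + (bmat n a * A).trace))))
      = Complex.I * (M₁ * (M₂ * A)).trace + Complex.I * (M₁ * A * M₂).trace
        - Complex.I * (n:ℂ)⁻¹ * M₁.trace * (M₂ * A).trace
        - Complex.I * (n:ℂ)⁻¹ * M₁.trace * (A * M₂).trace
        - 2 * Complex.I * (n:ℂ)⁻¹ * M₂.trace * (M₁ * A).trace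
        + 2 * Complex.I * (n:ℂ)⁻¹ * (n:ℂ)⁻¹ * M₂.trace * M₁.trace * A.trace := by
  calc ∑ a : BIdx n,
        (Complex.I * (M₁ * bmat n a).trace *
          (-((M₂ * (A * bmat n a)).trace) - (M₂ * bmat n a * A).trace
            + (n:ℂ)⁻¹ * (M₂.trace * ((A * bmat n a).trace + (bmat n a * A).trace))))
      = ∑ a : BIdx n,
          ((-Complex.I) * ((M₂ * A * bmat n a * (1:Mat n)).trace * (M₁ * bmat n a * (1:Mat n)).trace)
          + (-Complex.I) * ((M₂ * bmat n a * A).trace * (M₁ * bmat n a * (1:Mat n)).trace)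
          + (Complex.I * (n:ℂ)⁻¹ * M₂.trace) *
              ((A * bmat n a * (1:Mat n)).trace * (M₁ * bmat n a * (1:Mat n)).trace)
          + (Complex.I * (n:ℂ)⁻¹ * M₂.trace) *
              (((1:Mat n) * bmat n a * A).trace * (M₁ * bmat n a * (1:Mat n)).trace)) :=
        Finset.sum_congr rfl fun a _ => by
          simp only [Matrix.mul_one, Matrix.one_mul, mul_assoc, Matrix.mul_assoc]
          ring
    _ = _ := by
        rw [Finset.sum_add_distrib, Finset.sum_add_distrib, Finset.sum_add_distrib,
          ← Finset.mul_sum, ← Finset.mul_sum, ← Finset.mul_sum, ← Finset.mul_sum,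
          L2g n hn, L2g n hn, L2g n hn, L2g n hn]
        simp only [Matrix.one_mul, Matrix.mul_one, Matrix.mul_assoc]
        ring

set_option maxHeartbeats 4000000

lemma stageC (n : ℕ) (hn : 3 ≤ n) (X W : Mat n) :
    ∑ a : BIdx n, (Complex.I * ((W) * ((Complex.I • (eta n * (bmat n a) + (bmat n a) * eta n)) * (brkt (X) (brkt (bmat n a) (eta n))))).trace + Complex.I * ((W) * (brkt (X) (brkt (bmat n a) (eta n))) * (Complex.I • (eta n * (bmat n a) + (bmat n a) * eta n))).trace
        - Complex.I * (n:ℂ)⁻¹ * (W).trace * ((Complex.I • (eta n * (bmat n a) + (bmat n a) * eta n)) * (brkt (X) (brkt (bmat n a) (eta n)))).trace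
        - Complex.I * (n:ℂ)⁻¹ * (W).trace * ((brkt (X) (brkt (bmat n a) (eta n))) * (Complex.I • (eta n * (bmat n a) + (bmat n a) * eta n))).trace
        - 2 * Complex.I * (n:ℂ)⁻¹ * (Complex.I • (eta n * (bmat n a) + (bmat n a) * eta n)).trace * ((W) * (brkt (X) (brkt (bmat n a) (eta n)))).trace
        + 2 * Complex.I * (n:ℂ)⁻¹ * (n:ℂ)⁻¹ * (Complex.I • (eta n * (bmat n a) + (bmat n a) * eta n)).trace * (W).trace * (brkt (X) (brkt (bmat n a) (eta n))).trace)
      = (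
        (2 : ℂ) * Complex.I ^ 2 * (W).trace * (eta n * X * eta n).trace
      + (-2 : ℂ) * Complex.I ^ 2 * (W * X).trace * (eta n * eta n).trace
      + (-2 : ℂ) * Complex.I ^ 2 * (W * eta n * eta n).trace * (X).trace
      + (4 : ℂ) * Complex.I ^ 2 * (n:ℂ)⁻¹ * (W).trace * (X).trace * (eta n * eta n).trace
      + (-4 : ℂ) * Complex.I ^ 2 * (n:ℂ)⁻¹ * (W * X * eta n * eta n).trace
      + (4 : ℂ) * Complex.I ^ 2 * (n:ℂ)⁻¹ * (X * W * eta n * eta n).trace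
      + (4 : ℂ) * Complex.I ^ 2 * (n:ℂ)⁻¹ * (eta n * W * X * eta n).trace
      + (-4 : ℂ) * Complex.I ^ 2 * (n:ℂ)⁻¹ * (eta n * X * W * eta n).trace
      + (4 : ℂ) * Complex.I ^ 2 * (n:ℂ)⁻¹ ^ 2 * (W * X * eta n).trace * (eta n).trace
      + (-4 : ℂ) * Complex.I ^ 2 * (n:ℂ)⁻¹ ^ 2 * (X * W * eta n).trace * (eta n).trace
      + (-4 : ℂ) * Complex.I ^ 2 * (n:ℂ)⁻¹ ^ 2 * (eta n).trace * (eta n * W * X).trace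
      + (4 : ℂ) * Complex.I ^ 2 * (n:ℂ)⁻¹ ^ 2 * (eta n).trace * (eta n * X * W).trace
      + (1 : ℂ) * Complex.I ^ 2 * (n:ℂ) * (W * X * eta n * eta n).trace
      + (1 : ℂ) * Complex.I ^ 2 * (n:ℂ) * (W * eta n * eta n * X).trace
      + (-1 : ℂ) * Complex.I ^ 2 * (n:ℂ) * (n:ℂ)⁻¹ * (W).trace * (X * eta n * eta n).trace
      + (-2 : ℂ) * Complex.I ^ 2 * (n:ℂ) * (n:ℂ)⁻¹ * (W).trace * (eta n * X * eta n).trace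
      + (-1 : ℂ) * Complex.I ^ 2 * (n:ℂ) * (n:ℂ)⁻¹ * (W).trace * (eta n * eta n * X).trace ) := by
  calc ∑ a : BIdx n, (Complex.I * ((W) * ((Complex.I • (eta n * (bmat n a) + (bmat n a) * eta n)) * (brkt (X) (brkt (bmat n a) (eta n))))).trace + Complex.I * ((W) * (brkt (X) (brkt (bmat n a) (eta n))) * (Complex.I • (eta n * (bmat n a) + (bmat n a) * eta n))).trace
        - Complex.I * (n:ℂ)⁻¹ * (W).trace * ((Complex.I • (eta n * (bmat n a) + (bmat n a) * eta n)) * (brkt (X) (brkt (bmat n a) (eta n)))).trace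
        - Complex.I * (n:ℂ)⁻¹ * (W).trace * ((brkt (X) (brkt (bmat n a) (eta n))) * (Complex.I • (eta n * (bmat n a) + (bmat n a) * eta n))).trace
        - 2 * Complex.I * (n:ℂ)⁻¹ * (Complex.I • (eta n * (bmat n a) + (bmat n a) * eta n)).trace * ((W) * (brkt (X) (brkt (bmat n a) (eta n)))).trace
        + 2 * Complex.I * (n:ℂ)⁻¹ * (n:ℂ)⁻¹ * (Complex.I • (eta n * (bmat n a) + (bmat n a) * eta n)).trace * (W).trace * (brkt (X) (brkt (bmat n a) (eta n))).trace)
      = ∑ a : BIdx n, (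
            ((1 : ℂ) * Complex.I ^ 2) * ((W * eta n) * bmat n a * (X) * bmat n a * (eta n)).trace
          + ((-1 : ℂ) * Complex.I ^ 2) * ((W * eta n) * bmat n a * (X * eta n) * bmat n a * (1 : Mat n)).trace
          + ((-1 : ℂ) * Complex.I ^ 2) * ((W * eta n) * bmat n a * (1 : Mat n) * bmat n a * (eta n * X)).trace
          + ((1 : ℂ) * Complex.I ^ 2) * ((W * eta n) * bmat n a * (eta n) * bmat n a * (X)).trace
          + ((1 : ℂ) * Complex.I ^ 2) * ((W) * bmat n a * (eta n * X) * bmat n a * (eta n)).trace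
          + ((-1 : ℂ) * Complex.I ^ 2) * ((W) * bmat n a * (eta n * X * eta n) * bmat n a * (1 : Mat n)).trace
          + ((-1 : ℂ) * Complex.I ^ 2) * ((W) * bmat n a * (eta n) * bmat n a * (eta n * X)).trace
          + ((1 : ℂ) * Complex.I ^ 2) * ((W) * bmat n a * (eta n * eta n) * bmat n a * (X)).trace
          + ((1 : ℂ) * Complex.I ^ 2) * ((W * X) * bmat n a * (eta n * eta n) * bmat n a * (1 : Mat n)).trace
          + ((1 : ℂ) * Complex.I ^ 2) * ((W * X) * bmat n a * (eta n) * bmat n a * (eta n)).trace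
          + ((-1 : ℂ) * Complex.I ^ 2) * ((W * X * eta n) * bmat n a * (eta n) * bmat n a * (1 : Mat n)).trace
          + ((-1 : ℂ) * Complex.I ^ 2) * ((W * X * eta n) * bmat n a * (1 : Mat n) * bmat n a * (eta n)).trace
          + ((-1 : ℂ) * Complex.I ^ 2) * ((W) * bmat n a * (eta n * X * eta n) * bmat n a * (1 : Mat n)).trace
          + ((-1 : ℂ) * Complex.I ^ 2) * ((W) * bmat n a * (eta n * X) * bmat n a * (eta n)).trace
          + ((1 : ℂ) * Complex.I ^ 2) * ((W * eta n) * bmat n a * (X * eta n) * bmat n a * (1 : Mat n)).trace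
          + ((1 : ℂ) * Complex.I ^ 2) * ((W * eta n) * bmat n a * (X) * bmat n a * (eta n)).trace
          + ((-1 : ℂ) * Complex.I ^ 2 * (n:ℂ)⁻¹ * (W).trace) * ((eta n) * bmat n a * (X) * bmat n a * (eta n)).trace
          + ((1 : ℂ) * Complex.I ^ 2 * (n:ℂ)⁻¹ * (W).trace) * ((eta n) * bmat n a * (X * eta n) * bmat n a * (1 : Mat n)).trace
          + ((1 : ℂ) * Complex.I ^ 2 * (n:ℂ)⁻¹ * (W).trace) * ((eta n) * bmat n a * (1 : Mat n) * bmat n a * (eta n * X)).trace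
          + ((-1 : ℂ) * Complex.I ^ 2 * (n:ℂ)⁻¹ * (W).trace) * ((eta n) * bmat n a * (eta n) * bmat n a * (X)).trace
          + ((-1 : ℂ) * Complex.I ^ 2 * (n:ℂ)⁻¹ * (W).trace) * ((1 : Mat n) * bmat n a * (eta n * X) * bmat n a * (eta n)).trace
          + ((1 : ℂ) * Complex.I ^ 2 * (n:ℂ)⁻¹ * (W).trace) * ((1 : Mat n) * bmat n a * (eta n * X * eta n) * bmat n a * (1 : Mat n)).trace
          + ((1 : ℂ) * Complex.I ^ 2 * (n:ℂ)⁻¹ * (W).trace) * ((1 : Mat n) * bmat n a * (eta n) * bmat n a * (eta n * X)).trace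
          + ((-1 : ℂ) * Complex.I ^ 2 * (n:ℂ)⁻¹ * (W).trace) * ((1 : Mat n) * bmat n a * (eta n * eta n) * bmat n a * (X)).trace
          + ((-1 : ℂ) * Complex.I ^ 2 * (n:ℂ)⁻¹ * (W).trace) * ((X) * bmat n a * (eta n * eta n) * bmat n a * (1 : Mat n)).trace
          + ((-1 : ℂ) * Complex.I ^ 2 * (n:ℂ)⁻¹ * (W).trace) * ((X) * bmat n a * (eta n) * bmat n a * (eta n)).trace
          + ((1 : ℂ) * Complex.I ^ 2 * (n:ℂ)⁻¹ * (W).trace) * ((X * eta n) * bmat n a * (eta n) * bmat n a * (1 : Mat n)).trace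
          + ((1 : ℂ) * Complex.I ^ 2 * (n:ℂ)⁻¹ * (W).trace) * ((X * eta n) * bmat n a * (1 : Mat n) * bmat n a * (eta n)).trace
          + ((1 : ℂ) * Complex.I ^ 2 * (n:ℂ)⁻¹ * (W).trace) * ((1 : Mat n) * bmat n a * (eta n * X * eta n) * bmat n a * (1 : Mat n)).trace
          + ((1 : ℂ) * Complex.I ^ 2 * (n:ℂ)⁻¹ * (W).trace) * ((1 : Mat n) * bmat n a * (eta n * X) * bmat n a * (eta n)).trace
          + ((-1 : ℂ) * Complex.I ^ 2 * (n:ℂ)⁻¹ * (W).trace) * ((eta n) * bmat n a * (X * eta n) * bmat n a * (1 : Mat n)).trace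
          + ((-1 : ℂ) * Complex.I ^ 2 * (n:ℂ)⁻¹ * (W).trace) * ((eta n) * bmat n a * (X) * bmat n a * (eta n)).trace
          + ((-2 : ℂ) * Complex.I ^ 2 * (n:ℂ)⁻¹) * (((eta n) * bmat n a * (1 : Mat n)).trace * ((W * X) * bmat n a * (eta n)).trace)
          + ((2 : ℂ) * Complex.I ^ 2 * (n:ℂ)⁻¹) * (((eta n) * bmat n a * (1 : Mat n)).trace * ((W * X * eta n) * bmat n a * (1 : Mat n)).trace)
          + ((2 : ℂ) * Complex.I ^ 2 * (n:ℂ)⁻¹) * (((eta n) * bmat n a * (1 : Mat n)).trace * ((W) * bmat n a * (eta n * X)).trace)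
          + ((-2 : ℂ) * Complex.I ^ 2 * (n:ℂ)⁻¹) * (((eta n) * bmat n a * (1 : Mat n)).trace * ((W * eta n) * bmat n a * (X)).trace)
          + ((-2 : ℂ) * Complex.I ^ 2 * (n:ℂ)⁻¹) * (((1 : Mat n) * bmat n a * (eta n)).trace * ((W * X) * bmat n a * (eta n)).trace)
          + ((2 : ℂ) * Complex.I ^ 2 * (n:ℂ)⁻¹) * (((1 : Mat n) * bmat n a * (eta n)).trace * ((W * X * eta n) * bmat n a * (1 : Mat n)).trace)
          + ((2 : ℂ) * Complex.I ^ 2 * (n:ℂ)⁻¹) * (((1 : Mat n) * bmat n a * (eta n)).trace * ((W) * bmat n a * (eta n * X)).trace)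
          + ((-2 : ℂ) * Complex.I ^ 2 * (n:ℂ)⁻¹) * (((1 : Mat n) * bmat n a * (eta n)).trace * ((W * eta n) * bmat n a * (X)).trace)
          + ((2 : ℂ) * Complex.I ^ 2 * (n:ℂ)⁻¹ ^ 2 * (W).trace) * (((eta n) * bmat n a * (1 : Mat n)).trace * ((X) * bmat n a * (eta n)).trace)
          + ((-2 : ℂ) * Complex.I ^ 2 * (n:ℂ)⁻¹ ^ 2 * (W).trace) * (((eta n) * bmat n a * (1 : Mat n)).trace * ((X * eta n) * bmat n a * (1 : Mat n)).trace)
          + ((-2 : ℂ) * Complex.I ^ 2 * (n:ℂ)⁻¹ ^ 2 * (W).trace) * (((eta n) * bmat n a * (1 : Mat n)).trace * ((1 : Mat n) * bmat n a * (eta n * X)).trace)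
          + ((2 : ℂ) * Complex.I ^ 2 * (n:ℂ)⁻¹ ^ 2 * (W).trace) * (((eta n) * bmat n a * (1 : Mat n)).trace * ((eta n) * bmat n a * (X)).trace)
          + ((2 : ℂ) * Complex.I ^ 2 * (n:ℂ)⁻¹ ^ 2 * (W).trace) * (((1 : Mat n) * bmat n a * (eta n)).trace * ((X) * bmat n a * (eta n)).trace)
          + ((-2 : ℂ) * Complex.I ^ 2 * (n:ℂ)⁻¹ ^ 2 * (W).trace) * (((1 : Mat n) * bmat n a * (eta n)).trace * ((X * eta n) * bmat n a * (1 : Mat n)).trace)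
          + ((-2 : ℂ) * Complex.I ^ 2 * (n:ℂ)⁻¹ ^ 2 * (W).trace) * (((1 : Mat n) * bmat n a * (eta n)).trace * ((1 : Mat n) * bmat n a * (eta n * X)).trace)
          + ((2 : ℂ) * Complex.I ^ 2 * (n:ℂ)⁻¹ ^ 2 * (W).trace) * (((1 : Mat n) * bmat n a * (eta n)).trace * ((eta n) * bmat n a * (X)).trace) ) :=
        Finset.sum_congr rfl fun a _ => by
          simp only [brkt, smul_mul_assoc, mul_smul_comm, smul_add, smul_sub, smul_smul,
            mul_add, add_mul, mul_sub, sub_mul, Matrix.trace_add, Matrix.trace_sub,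
            Matrix.trace_smul, smul_eq_mul, neg_mul, mul_neg, neg_neg, mul_one, one_mul,
            mul_assoc]
          ring1
    _ = _ := by
        simp only [Finset.sum_add_distrib, ← Finset.mul_sum]
        simp only [L1g n hn, L2g n hn]
        simp only [Matrix.trace_one, Fintype.card_fin, mul_one, one_mul, mul_assoc]
        ring1


lemma stageD (n : ℕ) (hn : 3 ≤ n) :
    ∑ a : BIdx n, (
        (2 : ℂ) * Complex.I ^ 2 * ((Complex.I • (eta n * bmat n a + bmat n a * eta n))).trace * (eta n * bmat n a * eta n).trace
      + (-2 : ℂ) * Complex.I ^ 2 * ((Complex.I • (eta n * bmat n a + bmat n a * eta n)) * bmat n a).trace * (eta n * eta n).trace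
      + (-2 : ℂ) * Complex.I ^ 2 * ((Complex.I • (eta n * bmat n a + bmat n a * eta n)) * eta n * eta n).trace * (bmat n a).trace
      + (4 : ℂ) * Complex.I ^ 2 * (n:ℂ)⁻¹ * ((Complex.I • (eta n * bmat n a + bmat n a * eta n))).trace * (bmat n a).trace * (eta n * eta n).trace
      + (-4 : ℂ) * Complex.I ^ 2 * (n:ℂ)⁻¹ * ((Complex.I • (eta n * bmat n a + bmat n a * eta n)) * bmat n a * eta n * eta n).trace
      + (4 : ℂ) * Complex.I ^ 2 * (n:ℂ)⁻¹ * (bmat n a * (Complex.I • (eta n * bmat n a + bmat n a * eta n)) * eta n * eta n).trace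
      + (4 : ℂ) * Complex.I ^ 2 * (n:ℂ)⁻¹ * (eta n * (Complex.I • (eta n * bmat n a + bmat n a * eta n)) * bmat n a * eta n).trace
      + (-4 : ℂ) * Complex.I ^ 2 * (n:ℂ)⁻¹ * (eta n * bmat n a * (Complex.I • (eta n * bmat n a + bmat n a * eta n)) * eta n).trace
      + (4 : ℂ) * Complex.I ^ 2 * (n:ℂ)⁻¹ ^ 2 * ((Complex.I • (eta n * bmat n a + bmat n a * eta n)) * bmat n a * eta n).trace * (eta n).trace
      + (-4 : ℂ) * Complex.I ^ 2 * (n:ℂ)⁻¹ ^ 2 * (bmat n a * (Complex.I • (eta n * bmat n a + bmat n a * eta n)) * eta n).trace * (eta n).trace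
      + (-4 : ℂ) * Complex.I ^ 2 * (n:ℂ)⁻¹ ^ 2 * (eta n).trace * (eta n * (Complex.I • (eta n * bmat n a + bmat n a * eta n)) * bmat n a).trace
      + (4 : ℂ) * Complex.I ^ 2 * (n:ℂ)⁻¹ ^ 2 * (eta n).trace * (eta n * bmat n a * (Complex.I • (eta n * bmat n a + bmat n a * eta n))).trace
      + (1 : ℂ) * Complex.I ^ 2 * (n:ℂ) * ((Complex.I • (eta n * bmat n a + bmat n a * eta n)) * bmat n a * eta n * eta n).trace
      + (1 : ℂ) * Complex.I ^ 2 * (n:ℂ) * ((Complex.I • (eta n * bmat n a + bmat n a * eta n)) * eta n * eta n * bmat n a).trace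
      + (-1 : ℂ) * Complex.I ^ 2 * (n:ℂ) * (n:ℂ)⁻¹ * ((Complex.I • (eta n * bmat n a + bmat n a * eta n))).trace * (bmat n a * eta n * eta n).trace
      + (-2 : ℂ) * Complex.I ^ 2 * (n:ℂ) * (n:ℂ)⁻¹ * ((Complex.I • (eta n * bmat n a + bmat n a * eta n))).trace * (eta n * bmat n a * eta n).trace
      + (-1 : ℂ) * Complex.I ^ 2 * (n:ℂ) * (n:ℂ)⁻¹ * ((Complex.I • (eta n * bmat n a + bmat n a * eta n))).trace * (eta n * eta n * bmat n a).trace )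
      = (
        (16 : ℂ) * Complex.I ^ 4 * (n:ℂ) ^ 2 * (n:ℂ)⁻¹
      + (-4 : ℂ) * Complex.I ^ 4 * (n:ℂ) ^ 3
      + (-24 : ℂ) * Complex.I ^ 4 * (n:ℂ) ^ 3 * (n:ℂ)⁻¹
      + (6 : ℂ) * Complex.I ^ 4 * (n:ℂ) ^ 4
      + (8 : ℂ) * Complex.I ^ 4 * (n:ℂ) ^ 4 * (n:ℂ)⁻¹
      + (-2 : ℂ) * Complex.I ^ 4 * (n:ℂ) ^ 5 ) := by
  calc ∑ a : BIdx n, (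
        (2 : ℂ) * Complex.I ^ 2 * ((Complex.I • (eta n * bmat n a + bmat n a * eta n))).trace * (eta n * bmat n a * eta n).trace
      + (-2 : ℂ) * Complex.I ^ 2 * ((Complex.I • (eta n * bmat n a + bmat n a * eta n)) * bmat n a).trace * (eta n * eta n).trace
      + (-2 : ℂ) * Complex.I ^ 2 * ((Complex.I • (eta n * bmat n a + bmat n a * eta n)) * eta n * eta n).trace * (bmat n a).trace
      + (4 : ℂ) * Complex.I ^ 2 * (n:ℂ)⁻¹ * ((Complex.I • (eta n * bmat n a + bmat n a * eta n))).trace * (bmat n a).trace * (eta n * eta n).trace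
      + (-4 : ℂ) * Complex.I ^ 2 * (n:ℂ)⁻¹ * ((Complex.I • (eta n * bmat n a + bmat n a * eta n)) * bmat n a * eta n * eta n).trace
      + (4 : ℂ) * Complex.I ^ 2 * (n:ℂ)⁻¹ * (bmat n a * (Complex.I • (eta n * bmat n a + bmat n a * eta n)) * eta n * eta n).trace
      + (4 : ℂ) * Complex.I ^ 2 * (n:ℂ)⁻¹ * (eta n * (Complex.I • (eta n * bmat n a + bmat n a * eta n)) * bmat n a * eta n).trace
      + (-4 : ℂ) * Complex.I ^ 2 * (n:ℂ)⁻¹ * (eta n * bmat n a * (Complex.I • (eta n * bmat n a + bmat n a * eta n)) * eta n).trace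
      + (4 : ℂ) * Complex.I ^ 2 * (n:ℂ)⁻¹ ^ 2 * ((Complex.I • (eta n * bmat n a + bmat n a * eta n)) * bmat n a * eta n).trace * (eta n).trace
      + (-4 : ℂ) * Complex.I ^ 2 * (n:ℂ)⁻¹ ^ 2 * (bmat n a * (Complex.I • (eta n * bmat n a + bmat n a * eta n)) * eta n).trace * (eta n).trace
      + (-4 : ℂ) * Complex.I ^ 2 * (n:ℂ)⁻¹ ^ 2 * (eta n).trace * (eta n * (Complex.I • (eta n * bmat n a + bmat n a * eta n)) * bmat n a).trace
      + (4 : ℂ) * Complex.I ^ 2 * (n:ℂ)⁻¹ ^ 2 * (eta n).trace * (eta n * bmat n a * (Complex.I • (eta n * bmat n a + bmat n a * eta n))).trace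
      + (1 : ℂ) * Complex.I ^ 2 * (n:ℂ) * ((Complex.I • (eta n * bmat n a + bmat n a * eta n)) * bmat n a * eta n * eta n).trace
      + (1 : ℂ) * Complex.I ^ 2 * (n:ℂ) * ((Complex.I • (eta n * bmat n a + bmat n a * eta n)) * eta n * eta n * bmat n a).trace
      + (-1 : ℂ) * Complex.I ^ 2 * (n:ℂ) * (n:ℂ)⁻¹ * ((Complex.I • (eta n * bmat n a + bmat n a * eta n))).trace * (bmat n a * eta n * eta n).trace
      + (-2 : ℂ) * Complex.I ^ 2 * (n:ℂ) * (n:ℂ)⁻¹ * ((Complex.I • (eta n * bmat n a + bmat n a * eta n))).trace * (eta n * bmat n a * eta n).trace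
      + (-1 : ℂ) * Complex.I ^ 2 * (n:ℂ) * (n:ℂ)⁻¹ * ((Complex.I • (eta n * bmat n a + bmat n a * eta n))).trace * (eta n * eta n * bmat n a).trace )
      = ∑ a : BIdx n, (
            ((2 : ℂ) * Complex.I ^ 3) * (((eta n) * bmat n a * (1 : Mat n)).trace * ((eta n) * bmat n a * (eta n)).trace)
          + ((2 : ℂ) * Complex.I ^ 3) * (((1 : Mat n) * bmat n a * (eta n)).trace * ((eta n) * bmat n a * (eta n)).trace)
          + ((-2 : ℂ) * Complex.I ^ 3 * (eta n * eta n).trace) * ((eta n) * bmat n a * (1 : Mat n) * bmat n a * (1 : Mat n)).trace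
          + ((-2 : ℂ) * Complex.I ^ 3 * (eta n * eta n).trace) * ((1 : Mat n) * bmat n a * (eta n) * bmat n a * (1 : Mat n)).trace
          + ((-2 : ℂ) * Complex.I ^ 3) * (((eta n) * bmat n a * (eta n * eta n)).trace * ((1 : Mat n) * bmat n a * (1 : Mat n)).trace)
          + ((-2 : ℂ) * Complex.I ^ 3) * (((1 : Mat n) * bmat n a * (eta n * eta n * eta n)).trace * ((1 : Mat n) * bmat n a * (1 : Mat n)).trace)
          + ((4 : ℂ) * Complex.I ^ 3 * (n:ℂ)⁻¹ * (eta n * eta n).trace) * (((eta n) * bmat n a * (1 : Mat n)).trace * ((1 : Mat n) * bmat n a * (1 : Mat n)).trace)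
          + ((4 : ℂ) * Complex.I ^ 3 * (n:ℂ)⁻¹ * (eta n * eta n).trace) * (((1 : Mat n) * bmat n a * (eta n)).trace * ((1 : Mat n) * bmat n a * (1 : Mat n)).trace)
          + ((-4 : ℂ) * Complex.I ^ 3 * (n:ℂ)⁻¹) * ((eta n) * bmat n a * (1 : Mat n) * bmat n a * (eta n * eta n)).trace
          + ((-4 : ℂ) * Complex.I ^ 3 * (n:ℂ)⁻¹) * ((1 : Mat n) * bmat n a * (eta n) * bmat n a * (eta n * eta n)).trace
          + ((4 : ℂ) * Complex.I ^ 3 * (n:ℂ)⁻¹) * ((1 : Mat n) * bmat n a * (eta n) * bmat n a * (eta n * eta n)).trace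
          + ((4 : ℂ) * Complex.I ^ 3 * (n:ℂ)⁻¹) * ((1 : Mat n) * bmat n a * (1 : Mat n) * bmat n a * (eta n * eta n * eta n)).trace
          + ((4 : ℂ) * Complex.I ^ 3 * (n:ℂ)⁻¹) * ((eta n * eta n) * bmat n a * (1 : Mat n) * bmat n a * (eta n)).trace
          + ((4 : ℂ) * Complex.I ^ 3 * (n:ℂ)⁻¹) * ((eta n) * bmat n a * (eta n) * bmat n a * (eta n)).trace
          + ((-4 : ℂ) * Complex.I ^ 3 * (n:ℂ)⁻¹) * ((eta n) * bmat n a * (eta n) * bmat n a * (eta n)).trace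
          + ((-4 : ℂ) * Complex.I ^ 3 * (n:ℂ)⁻¹) * ((eta n) * bmat n a * (1 : Mat n) * bmat n a * (eta n * eta n)).trace
          + ((4 : ℂ) * Complex.I ^ 3 * (n:ℂ)⁻¹ ^ 2 * (eta n).trace) * ((eta n) * bmat n a * (1 : Mat n) * bmat n a * (eta n)).trace
          + ((4 : ℂ) * Complex.I ^ 3 * (n:ℂ)⁻¹ ^ 2 * (eta n).trace) * ((1 : Mat n) * bmat n a * (eta n) * bmat n a * (eta n)).trace
          + ((-4 : ℂ) * Complex.I ^ 3 * (n:ℂ)⁻¹ ^ 2 * (eta n).trace) * ((1 : Mat n) * bmat n a * (eta n) * bmat n a * (eta n)).trace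
          + ((-4 : ℂ) * Complex.I ^ 3 * (n:ℂ)⁻¹ ^ 2 * (eta n).trace) * ((1 : Mat n) * bmat n a * (1 : Mat n) * bmat n a * (eta n * eta n)).trace
          + ((-4 : ℂ) * Complex.I ^ 3 * (n:ℂ)⁻¹ ^ 2 * (eta n).trace) * ((eta n * eta n) * bmat n a * (1 : Mat n) * bmat n a * (1 : Mat n)).trace
          + ((-4 : ℂ) * Complex.I ^ 3 * (n:ℂ)⁻¹ ^ 2 * (eta n).trace) * ((eta n) * bmat n a * (eta n) * bmat n a * (1 : Mat n)).trace
          + ((4 : ℂ) * Complex.I ^ 3 * (n:ℂ)⁻¹ ^ 2 * (eta n).trace) * ((eta n) * bmat n a * (eta n) * bmat n a * (1 : Mat n)).trace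
          + ((4 : ℂ) * Complex.I ^ 3 * (n:ℂ)⁻¹ ^ 2 * (eta n).trace) * ((eta n) * bmat n a * (1 : Mat n) * bmat n a * (eta n)).trace
          + ((1 : ℂ) * Complex.I ^ 3 * (n:ℂ)) * ((eta n) * bmat n a * (1 : Mat n) * bmat n a * (eta n * eta n)).trace
          + ((1 : ℂ) * Complex.I ^ 3 * (n:ℂ)) * ((1 : Mat n) * bmat n a * (eta n) * bmat n a * (eta n * eta n)).trace
          + ((1 : ℂ) * Complex.I ^ 3 * (n:ℂ)) * ((eta n) * bmat n a * (eta n * eta n) * bmat n a * (1 : Mat n)).trace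
          + ((1 : ℂ) * Complex.I ^ 3 * (n:ℂ)) * ((1 : Mat n) * bmat n a * (eta n * eta n * eta n) * bmat n a * (1 : Mat n)).trace
          + ((-1 : ℂ) * Complex.I ^ 3 * (n:ℂ) * (n:ℂ)⁻¹) * (((eta n) * bmat n a * (1 : Mat n)).trace * ((1 : Mat n) * bmat n a * (eta n * eta n)).trace)
          + ((-1 : ℂ) * Complex.I ^ 3 * (n:ℂ) * (n:ℂ)⁻¹) * (((1 : Mat n) * bmat n a * (eta n)).trace * ((1 : Mat n) * bmat n a * (eta n * eta n)).trace)
          + ((-2 : ℂ) * Complex.I ^ 3 * (n:ℂ) * (n:ℂ)⁻¹) * (((eta n) * bmat n a * (1 : Mat n)).trace * ((eta n) * bmat n a * (eta n)).trace)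
          + ((-2 : ℂ) * Complex.I ^ 3 * (n:ℂ) * (n:ℂ)⁻¹) * (((1 : Mat n) * bmat n a * (eta n)).trace * ((eta n) * bmat n a * (eta n)).trace)
          + ((-1 : ℂ) * Complex.I ^ 3 * (n:ℂ) * (n:ℂ)⁻¹) * (((eta n) * bmat n a * (1 : Mat n)).trace * ((eta n * eta n) * bmat n a * (1 : Mat n)).trace)
          + ((-1 : ℂ) * Complex.I ^ 3 * (n:ℂ) * (n:ℂ)⁻¹) * (((1 : Mat n) * bmat n a * (eta n)).trace * ((eta n * eta n) * bmat n a * (1 : Mat n)).trace) ) :=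
        Finset.sum_congr rfl fun a _ => by
          simp only [brkt, smul_mul_assoc, mul_smul_comm, smul_add, smul_sub, smul_smul,
            mul_add, add_mul, mul_sub, sub_mul, Matrix.trace_add, Matrix.trace_sub,
            Matrix.trace_smul, smul_eq_mul, neg_mul, mul_neg, neg_neg, mul_one, one_mul,
            mul_assoc]
          ring1
    _ = _ := by
        simp only [Finset.sum_add_distrib, ← Finset.mul_sum]
        simp only [L1g n hn, L2g n hn]
        simp only [Matrix.trace_one, Fintype.card_fin, mul_one, one_mul, mul_assoc,
          trh1 n (by omega), trh2 n (by omega), trh3 n (by omega)]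
        ring1

set_option maxHeartbeats 4000000

/-- `(1/4)·Σ_{E₁,E₂,E₃,E₄ ∈ B} σ([E₁,[E₂,η]],E₃,E₄)·H(E₁,E₃)·H(E₂,E₄)
  = −(1/2)(n−2)²(n−1)n(n+2)`. -/
theorem sigma_H_H_contraction_second (n : ℕ) (hn : 3 ≤ n) :
    (1 / 4 : ℂ) * ∑ i₁ : BIdx n, ∑ i₂ : BIdx n, ∑ i₃ : BIdx n, ∑ i₄ : BIdx n,
      sigmaC n (brkt (bmat n i₁) (brkt (bmat n i₂) (eta n))) (bmat n i₃) (bmat n i₄) *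
        Hform n (bmat n i₁) (bmat n i₃) * Hform n (bmat n i₂) (bmat n i₄) =
      -(1 / 2 : ℂ) * ((n : ℂ) - 2) ^ 2 * ((n : ℂ) - 1) * (n : ℂ) * ((n : ℂ) + 2) := by
  have hn0 : (n:ℂ) ≠ 0 := Nat.cast_ne_zero.mpr (by omega)
  have h1 : ∀ i₁ i₂ : BIdx n,
      (∑ i₃ : BIdx n, ∑ i₄ : BIdx n,
        sigmaC n (brkt (bmat n i₁) (brkt (bmat n i₂) (eta n))) (bmat n i₃) (bmat n i₄) *
          Hform n (bmat n i₁) (bmat n i₃) * Hform n (bmat n i₂) (bmat n i₄))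
      = (Complex.I * ((Complex.I • (eta n * bmat n i₁ + bmat n i₁ * eta n)) * ((Complex.I • (eta n * (bmat n i₂) + (bmat n i₂) * eta n)) * (brkt (bmat n i₁) (brkt (bmat n i₂) (eta n))))).trace + Complex.I * ((Complex.I • (eta n * bmat n i₁ + bmat n i₁ * eta n)) * (brkt (bmat n i₁) (brkt (bmat n i₂) (eta n))) * (Complex.I • (eta n * (bmat n i₂) + (bmat n i₂) * eta n))).trace
        - Complex.I * (n:ℂ)⁻¹ * (Complex.I • (eta n * bmat n i₁ + bmat n i₁ * eta n)).trace * ((Complex.I • (eta n * (bmat n i₂) + (bmat n i₂) * eta n)) * (brkt (bmat n i₁) (brkt (bmat n i₂) (eta n)))).trace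
        - Complex.I * (n:ℂ)⁻¹ * (Complex.I • (eta n * bmat n i₁ + bmat n i₁ * eta n)).trace * ((brkt (bmat n i₁) (brkt (bmat n i₂) (eta n))) * (Complex.I • (eta n * (bmat n i₂) + (bmat n i₂) * eta n))).trace
        - 2 * Complex.I * (n:ℂ)⁻¹ * (Complex.I • (eta n * (bmat n i₂) + (bmat n i₂) * eta n)).trace * ((Complex.I • (eta n * bmat n i₁ + bmat n i₁ * eta n)) * (brkt (bmat n i₁) (brkt (bmat n i₂) (eta n)))).trace
        + 2 * Complex.I * (n:ℂ)⁻¹ * (n:ℂ)⁻¹ * (Complex.I • (eta n * (bmat n i₂) + (bmat n i₂) * eta n)).trace * (Complex.I • (eta n * bmat n i₁ + bmat n i₁ * eta n)).trace * (brkt (bmat n i₁) (brkt (bmat n i₂) (eta n))).trace) := by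
    intro i₁ i₂
    simp only [hform_eq]
    rw [Finset.sum_congr rfl (fun i₃ _ => stage4 n hn
      (brkt (bmat n i₁) (brkt (bmat n i₂) (eta n)))
      (Complex.I • (eta n * bmat n i₁ + bmat n i₁ * eta n))
      (Complex.I • (eta n * bmat n i₂ + bmat n i₂ * eta n)) (bmat n i₃))]
    exact stage3 n hn (brkt (bmat n i₁) (brkt (bmat n i₂) (eta n)))
      (Complex.I • (eta n * bmat n i₁ + bmat n i₁ * eta n))
      (Complex.I • (eta n * bmat n i₂ + bmat n i₂ * eta n))
  simp only [h1]
  simp only [stageC n hn]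
  rw [stageD n hn]
  have hI4 : Complex.I ^ 4 = 1 := by
    rw [show (4:ℕ) = 2 + 2 from rfl, pow_add, Complex.I_sq]; ring
  rw [hI4]
  field_simp
  ring
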